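/- On ℝ³, define the 1-form α by α_p(v) = v₃ − p₁·v₂ for p = (p₁,p₂,p₃) and v = (v₁,v₂,v₃) (i.e. α = dz − x dy). Define L : ℝ³ → ℝ³ by L(x,y,z) = (2x+y, x+y, z + x² + xy + y²/2). For ε ∈ ℝ, define u_ε(x) = ε·sin(2πx), U_ε(x) = ε·x·sin(2πx) + (ε/(2π))·(cos(2πx) − 1), H_ε(x,y,z) = (x, y + u_ε(x), z + U_ε(x)), and F_ε := L ∘ H_ε. Then for every ε ∈ ℝ, F_ε preserves α: for every p ∈ ℝ³ and every v ∈ ℝ³, α_{F_ε(p)}(D(F_ε)_p(v)) = α_p(v), where D(F_ε)_p denotes the Fréchet derivative of F_ε at p. -/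

import Mathlib

/-- The standard contact form `α = dz - x dy` of the Heisenberg manifold, at the point `p`
evaluated on the tangent vector `v`. -/
noncomputable def heisAlpha (p v : ℝ × ℝ × ℝ) : ℝ := v.2.2 - p.1 * v.2.1

/-- The lift `L(x,y,z) = (2x+y, x+y, z + x² + xy + y²/2)`. -/
noncomputable def Lmap (p : ℝ × ℝ × ℝ) : ℝ × ℝ × ℝ :=
  (2 * p.1 + p.2.1, p.1 + p.2.1, p.2.2 + p.1 ^ 2 + p.1 * p.2.1 + p.2.1 ^ 2 / 2)

/-- `u_ε(x) = ε sin(2πx)`. -/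
noncomputable def uEps (ε x : ℝ) : ℝ := ε * Real.sin (2 * Real.pi * x)

/-- `U_ε(x) = ε x sin(2πx) + (ε/(2π))(cos(2πx) - 1)`. -/
noncomputable def UEps (ε x : ℝ) : ℝ :=
  ε * x * Real.sin (2 * Real.pi * x) + (ε / (2 * Real.pi)) * (Real.cos (2 * Real.pi * x) - 1)

/-- The shear map `H_ε(x,y,z) = (x, y + u_ε(x), z + U_ε(x))`. -/
noncomputable def Hmap (ε : ℝ) (p : ℝ × ℝ × ℝ) : ℝ × ℝ × ℝ :=
  (p.1, p.2.1 + uEps ε p.1, p.2.2 + UEps ε p.1)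

/-- The perturbed automorphism `F_ε = L ∘ H_ε`. -/
noncomputable def Fmap (ε : ℝ) : ℝ × ℝ × ℝ → ℝ × ℝ × ℝ := Lmap ∘ Hmap ε

/-!
`F_ε = L ∘ H_ε`, and both factors preserve `α = dz - x dy`, so the chain rule finishes. Only the
last two components of a map `f` enter the pullback, `f^* α = d f₃ - f₁ d f₂`, which for `L` is a
direct computation. `H_ε` is a shear `(x, y + u(x), z + U(x))`, which pulls `α` back to
`α + (U' - x u') dx`; the function `U_ε` is chosen exactly so that `U_ε' = x u_ε'`.
-/

open Real

def PreservesHeisAlpha (f : ℝ × ℝ × ℝ → ℝ × ℝ × ℝ) : Prop :=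
  ∀ p v, heisAlpha (f p) (fderiv ℝ f p v) = heisAlpha p v

theorem PreservesHeisAlpha.comp {f g : ℝ × ℝ × ℝ → ℝ × ℝ × ℝ} (hg : PreservesHeisAlpha g)
    (hf : PreservesHeisAlpha f) (hg_diff : Differentiable ℝ g) (hf_diff : Differentiable ℝ f) :
    PreservesHeisAlpha (g ∘ f) := fun p v => by
  rw [fderiv_comp p (hg_diff _) (hf_diff _), ContinuousLinearMap.comp_apply, Function.comp_apply,
    hg, hf]

theorem heisAlpha_fderiv {f : ℝ × ℝ × ℝ → ℝ × ℝ × ℝ} {p : ℝ × ℝ × ℝ}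
    {f₂' f₃' : (ℝ × ℝ × ℝ) →L[ℝ] ℝ} (hf : DifferentiableAt ℝ f p)
    (hf₂ : HasFDerivAt (fun q => (f q).2.1) f₂' p) (hf₃ : HasFDerivAt (fun q => (f q).2.2) f₃' p)
    (v : ℝ × ℝ × ℝ) :
    heisAlpha (f p) (fderiv ℝ f p v) = f₃' v - (f p).1 * f₂' v := by
  rw [hf₂.unique hf.hasFDerivAt.snd.fst, hf₃.unique hf.hasFDerivAt.snd.snd]
  rfl

theorem differentiable_Lmap : Differentiable ℝ Lmap := by
  unfold Lmap
  fun_prop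

theorem preservesHeisAlpha_Lmap : PreservesHeisAlpha Lmap := fun p v => by
  have hx : HasFDerivAt (fun q : ℝ × ℝ × ℝ => q.1) _ p := hasFDerivAt_fst (𝕜 := ℝ)
  have hy : HasFDerivAt (fun q : ℝ × ℝ × ℝ => q.2.1) _ p := (hasFDerivAt_snd (𝕜 := ℝ)).fst
  have hz : HasFDerivAt (fun q : ℝ × ℝ × ℝ => q.2.2) _ p := (hasFDerivAt_snd (𝕜 := ℝ)).snd
  rw [heisAlpha_fderiv (differentiable_Lmap p) (hx.add hy)
    (((hz.add (hx.pow 2)).add (hx.mul hy)).add ((hy.pow 2).mul_const 2⁻¹))]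
  simp only [Nat.add_one_sub_one, pow_one, nsmul_eq_mul, Nat.cast_ofNat,
    add_apply, ContinuousLinearMap.comp_apply, ContinuousLinearMap.coe_snd',
    smul_apply, ContinuousLinearMap.coe_fst', smul_eq_mul, Lmap, heisAlpha]
  ring

theorem differentiable_shear {u U : ℝ → ℝ} (hu : Differentiable ℝ u) (hU : Differentiable ℝ U) :
    Differentiable ℝ fun p : ℝ × ℝ × ℝ => (p.1, p.2.1 + u p.1, p.2.2 + U p.1) := by
  fun_prop

theorem preservesHeisAlpha_shear {u u' U : ℝ → ℝ} (hu : ∀ x, HasDerivAt u (u' x) x)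
    (hU : ∀ x, HasDerivAt U (x * u' x) x) :
    PreservesHeisAlpha fun p => (p.1, p.2.1 + u p.1, p.2.2 + U p.1) := fun p v => by
  have hx : HasFDerivAt (fun q : ℝ × ℝ × ℝ => q.1) _ p := hasFDerivAt_fst (𝕜 := ℝ)
  have hy : HasFDerivAt (fun q : ℝ × ℝ × ℝ => q.2.1) _ p := (hasFDerivAt_snd (𝕜 := ℝ)).fst
  have hz : HasFDerivAt (fun q : ℝ × ℝ × ℝ => q.2.2) _ p := (hasFDerivAt_snd (𝕜 := ℝ)).snd
  have h_diff := differentiable_shear (fun x => (hu x).differentiableAt)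
    (fun x => (hU x).differentiableAt) p
  rw [heisAlpha_fderiv h_diff (hy.add ((hu p.1).comp_hasFDerivAt p hx))
    (hz.add ((hU p.1).comp_hasFDerivAt p hx))]
  simp only [add_apply, ContinuousLinearMap.comp_apply,
    ContinuousLinearMap.coe_snd', smul_apply, ContinuousLinearMap.coe_fst',
    smul_eq_mul, heisAlpha]
  ring

theorem hasDerivAt_uEps (ε x : ℝ) :
    HasDerivAt (uEps ε) (ε * (2 * π * cos (2 * π * x))) x :=
  (((hasDerivAt_id' x).const_mul (2 * π)).sin.const_mul ε).congr_deriv (by ring)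

theorem hasDerivAt_UEps (ε x : ℝ) :
    HasDerivAt (UEps ε) (x * (ε * (2 * π * cos (2 * π * x)))) x := by
  have h_lin := (hasDerivAt_id' x).const_mul (2 * π)
  refine ((((hasDerivAt_id' x).const_mul ε).mul h_lin.sin).add
    ((h_lin.cos.sub_const 1).const_mul (ε / (2 * π)))).congr_deriv ?_
  field_simp
  ring

/-- `F_ε = L ∘ H_ε` preserves the contact form `α = dz - x dy`. -/
theorem stmt_12 (ε : ℝ) (p v : ℝ × ℝ × ℝ) :
    heisAlpha (Fmap ε p) (fderiv ℝ (Fmap ε) p v) = heisAlpha p v := by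
  have hH_diff : Differentiable ℝ (Hmap ε) := differentiable_shear
    (fun x => (hasDerivAt_uEps ε x).differentiableAt) (fun x => (hasDerivAt_UEps ε x).differentiableAt)
  exact (preservesHeisAlpha_Lmap.comp (preservesHeisAlpha_shear (hasDerivAt_uEps ε)
    (hasDerivAt_UEps ε)) differentiable_Lmap hH_diff) p v
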